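/- Let S be a metric space, (μ_n) Borel probability measures converging weakly to μ, and (f_n) measurable functions with f_n(s) ≥ K > −∞ for all s ∈ S and n. Then ∫_S liminf_{n→∞, s'→s} f_n(s') dμ(s) ≤ liminf_{n→∞} ∫_S f_n dμ_n. -/

import Mathlib

open MeasureTheory Filter Topology ENNReal

/-- The positive part of an extended real number, as an element of `ℝ≥0∞`. -/
noncomputable def eposPart (x : EReal) : ℝ≥0∞ :=
  if x = ⊤ then ⊤ else ENNReal.ofReal x.toReal

/-- The integral of an extended-real-valued function: `∫ f⁺ dμ − ∫ f⁻ dμ`. -/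
noncomputable def eintegral {S : Type*} [MeasurableSpace S]
    (μ : MeasureTheory.Measure S) (f : S → EReal) : EReal :=
  ((∫⁻ s, eposPart (f s) ∂μ : ℝ≥0∞) : EReal) -
    ((∫⁻ s, eposPart (-f s) ∂μ : ℝ≥0∞) : EReal)

/-- The integral of an extended-real-valued function `f` is defined when
`min(∫ f⁺ dμ, ∫ f⁻ dμ) < ∞`. -/
def EIntegralDefined {S : Type*} [MeasurableSpace S]
    (μ : MeasureTheory.Measure S) (f : S → EReal) : Prop :=
  (∫⁻ s, eposPart (f s) ∂μ) ≠ ⊤ ∨ (∫⁻ s, eposPart (-f s) ∂μ) ≠ ⊤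

/-!
Put `K₀ = min K 0`. For a function `f ≥ K₀` on a probability space,
`eintegral μ f = ∫⁻ (f - K₀)⁺ dμ + K₀`, and `x ↦ (x - K₀)⁺` is continuous and monotone, so it
commutes with lower limits; this reduces the claim to `ℝ≥0∞`-valued functions `φₙ`.
The joint lower limit of `φ` at `x` is the increasing limit in `k` of the lower semicontinuous
envelopes `gₖ` of `infₘ≥ₖ φₘ`, and `gₖ ≤ φₙ` for `n ≥ k`. Weak convergence gives
`μ(G) ≤ liminf μₙ(G)` for open `G`, hence, by the layer cake formula applied to the open
superlevel sets, `∫ gₖ dμ ≤ liminf ∫ gₖ dμₙ`. Monotone convergence in `k` concludes.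
-/

section LiminfNhds

variable {X α : Type*} [TopologicalSpace X] [CompleteLinearOrder α]

theorem lowerSemicontinuous_liminf_nhds [DenselyOrdered α] (h : X → α) :
    LowerSemicontinuous fun x => liminf h (𝓝 x) := by
  intro x a ha
  obtain ⟨b, hab, hb⟩ := exists_between ha
  filter_upwards [eventually_eventually_nhds.2 (eventually_lt_of_lt_liminf hb)] with y hy
  exact hab.trans_le (le_liminf_of_le (by isBoundedDefault) (hy.mono fun _ => le_of_lt))

theorem liminf_nhds_le_self (h : X → α) (x : X) : liminf h (𝓝 x) ≤ h x :=
  liminf_le_of_frequently_le'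
    ((show ∃ᶠ y in pure x, h y ≤ h x from frequently_pure.2 le_rfl).filter_mono (pure_le_nhds x))

theorem liminf_prod_nhds_eq_iSup_liminf_nhds (u : ℕ → X → α) (x : X) :
    liminf (fun p : ℕ × X => u p.1 p.2) (atTop ×ˢ 𝓝 x) =
      ⨆ k, liminf (fun y => ⨅ m ≥ k, u m y) (𝓝 x) := by
  rw [(atTop_basis.prod (𝓝 x).basis_sets).liminf_eq_iSup_iInf]
  simp only [liminf_eq_iSup_iInf (f := 𝓝 x), iSup_prod, true_and, Set.mem_prod, Set.mem_Ici]
  refine iSup_congr fun k => iSup_congr fun U => iSup_congr fun _ => ?_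
  simp only [iInf_prod, iInf_and, id, ge_iff_le]
  rw [iInf_comm]
  refine iInf_congr fun y => ?_
  rw [iInf_comm, iInf_congr fun i => iInf_comm]

theorem lowerSemicontinuous_liminf_prod_nhds [DenselyOrdered α] (u : ℕ → X → α) :
    LowerSemicontinuous fun x => liminf (fun p : ℕ × X => u p.1 p.2) (atTop ×ˢ 𝓝 x) := by
  simp_rw [liminf_prod_nhds_eq_iSup_liminf_nhds]
  exact lowerSemicontinuous_iSup fun k => lowerSemicontinuous_liminf_nhds _

end LiminfNhds

section Portmanteau

open scoped BoundedContinuousFunction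

variable {Ω : Type*} [MeasurableSpace Ω] [TopologicalSpace Ω] [OpensMeasurableSpace Ω]
  {μ : Measure Ω} {μs : ℕ → Measure Ω}

theorem lintegral_ofReal_le_liminf_lintegral_of_lowerSemicontinuous
    (h_opens : ∀ G, IsOpen G → μ G ≤ liminf (fun n => μs n G) atTop)
    {f : Ω → ℝ} (hf : LowerSemicontinuous f) (hf_nonneg : 0 ≤ f) :
    ∫⁻ x, ENNReal.ofReal (f x) ∂μ ≤ liminf (fun n => ∫⁻ x, ENNReal.ofReal (f x) ∂μs n) atTop := by
  have h_layer : ∀ ν : Measure Ω,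
      ∫⁻ x, ENNReal.ofReal (f x) ∂ν = ∫⁻ t in Set.Ioi 0, ν {x | t < f x} := fun ν =>
    lintegral_eq_lintegral_meas_lt ν (.of_forall hf_nonneg) hf.measurable.aemeasurable
  simp_rw [h_layer]
  calc ∫⁻ t in Set.Ioi 0, μ {x | t < f x}
      ≤ ∫⁻ t in Set.Ioi 0, liminf (fun n => μs n {x | t < f x}) atTop :=
        lintegral_mono fun t => h_opens _ (hf.isOpen_preimage t)
    _ ≤ liminf (fun n => ∫⁻ t in Set.Ioi 0, μs n {x | t < f x}) atTop :=
        lintegral_liminf_le fun n => Antitone.measurable fun _ _ hst =>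
          measure_mono fun _ hx => hst.trans_lt hx

theorem lintegral_le_liminf_lintegral_of_lowerSemicontinuous
    (h_opens : ∀ G, IsOpen G → μ G ≤ liminf (fun n => μs n G) atTop)
    {g : Ω → ℝ≥0∞} (hg : LowerSemicontinuous g) :
    ∫⁻ x, g x ∂μ ≤ liminf (fun n => ∫⁻ x, g x ∂μs n) atTop := by
  have h_trunc : ∀ N : ℕ, ∀ y : ℝ≥0∞, ENNReal.ofReal (truncateToReal N y) = min (N : ℝ≥0∞) y :=
    fun N y => ENNReal.ofReal_toReal (ne_top_of_le_ne_top (natCast_ne_top N) (min_le_left _ _))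
  have h_sup : ∀ y : ℝ≥0∞, ⨆ N : ℕ, min (N : ℝ≥0∞) y = y := fun y => by
    rw [← iSup_inf_eq, ENNReal.iSup_natCast]
    exact min_eq_right le_top
  calc ∫⁻ x, g x ∂μ = ⨆ N : ℕ, ∫⁻ x, ENNReal.ofReal (truncateToReal N (g x)) ∂μ := by
        simp_rw [h_trunc, ← lintegral_iSup (fun N => measurable_const.min hg.measurable)
          (fun N M hNM x => min_le_min_right (g x) (Nat.cast_le.2 hNM)), h_sup]
    _ ≤ liminf (fun n => ∫⁻ x, g x ∂μs n) atTop := iSup_le fun N =>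
        (lintegral_ofReal_le_liminf_lintegral_of_lowerSemicontinuous h_opens
          (((continuous_truncateToReal (natCast_ne_top N)).comp_lowerSemicontinuous hg
            (monotone_truncateToReal (natCast_ne_top N)))) fun _ => truncateToReal_nonneg).trans
          (liminf_le_liminf (.of_forall fun n => lintegral_mono fun x =>
            (h_trunc N (g x)).trans_le (min_le_right _ _)))

theorem lintegral_liminf_prod_nhds_le
    (h_opens : ∀ G, IsOpen G → μ G ≤ liminf (fun n => μs n G) atTop) (u : ℕ → Ω → ℝ≥0∞) :
    ∫⁻ x, liminf (fun p : ℕ × Ω => u p.1 p.2) (atTop ×ˢ 𝓝 x) ∂μ ≤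
      liminf (fun n => ∫⁻ x, u n x ∂μs n) atTop := by
  set g : ℕ → Ω → ℝ≥0∞ := fun k x => liminf (fun y => ⨅ m ≥ k, u m y) (𝓝 x)
  have hg_lsc : ∀ k, LowerSemicontinuous (g k) := fun k => lowerSemicontinuous_liminf_nhds _
  have hg_mono : Monotone g := fun k l hkl x =>
    liminf_le_liminf (.of_forall fun y => biInf_mono fun _ hm => hkl.trans hm)
  have hg_le : ∀ {k n}, k ≤ n → ∀ x, g k x ≤ u n x := fun hkn x =>
    (liminf_nhds_le_self _ x).trans (biInf_le _ hkn)
  simp_rw [liminf_prod_nhds_eq_iSup_liminf_nhds]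
  rw [lintegral_iSup (fun k => (hg_lsc k).measurable) hg_mono]
  refine iSup_le fun k => (lintegral_le_liminf_lintegral_of_lowerSemicontinuous h_opens
    (hg_lsc k)).trans (liminf_le_liminf ?_)
  filter_upwards [eventually_ge_atTop k] with n hn using lintegral_mono (hg_le hn)

theorem le_liminf_measure_open_of_forall_integral_tendsto [HasOuterApproxClosed Ω]
    [IsProbabilityMeasure μ] [∀ n, IsProbabilityMeasure (μs n)]
    (h : ∀ f : Ω →ᵇ ℝ, Tendsto (fun n => ∫ x, f x ∂μs n) atTop (𝓝 (∫ x, f x ∂μ)))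
    {G : Set Ω} (hG : IsOpen G) :
    μ G ≤ liminf (fun n => μs n G) atTop :=
  ProbabilityMeasure.le_liminf_measure_open_of_tendsto (μ := ⟨μ, inferInstance⟩)
    (μs := fun n => ⟨μs n, inferInstance⟩)
    (ProbabilityMeasure.tendsto_iff_forall_integral_tendsto.2 h) hG

end Portmanteau

namespace EReal

theorem continuous_add_coe (c : ℝ) : Continuous fun x : EReal => x + c :=
  Monotone.continuous_of_surjective (fun _ _ h => by gcongr)
    fun y => ⟨y - c, sub_add_cancel⟩

theorem toENNReal_liminf_sub_coe {ι : Type*} {F : Filter ι} [F.NeBot] (u : ι → EReal) (c : ℝ) :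
    (liminf u F - c).toENNReal = liminf (fun i => (u i - c).toENNReal) F := by
  have h_mono : Monotone fun x : EReal => (x - c).toENNReal := fun _ _ hxy =>
    toENNReal_le_toENNReal (sub_le_sub hxy le_rfl)
  have h_cont : Continuous fun x : EReal => (x - c).toENNReal := by
    simpa [sub_eq_add_neg] using (continuous_add_coe (-c)).ereal_toENNReal
  exact h_mono.map_liminf_of_continuousAt u h_cont.continuousAt

theorem coe_ennreal_liminf_add_coe {ι : Type*} {F : Filter ι} [F.NeBot] (v : ι → ℝ≥0∞) (c : ℝ) :
    ((liminf v F : ℝ≥0∞) : EReal) + c = liminf (fun i => (v i : EReal) + c) F := by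
  have h_mono : Monotone fun y : ℝ≥0∞ => (y : EReal) + c := fun _ _ hxy =>
    add_le_add (coe_ennreal_le_coe_ennreal_iff.2 hxy) le_rfl
  exact h_mono.map_liminf_of_continuousAt v
    ((continuous_add_coe c).comp continuous_coe_ennreal_ereal).continuousAt

theorem coe_ennreal_sub_eq_sub_of_add_eq {a b n c : ℝ≥0∞} (hn : n ≠ ⊤) (hc : c ≠ ⊤)
    (h : b + n = a + c) : (a : EReal) - n = b - c := by
  lift n to NNReal using hn
  lift c to NNReal using hc
  rcases eq_or_ne a ⊤ with rfl | ha
  · obtain rfl : b = ⊤ := by simpa using h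
    simp [coe_nnreal_eq_coe_real]
  lift a to NNReal using ha
  lift b to NNReal using (by simpa using congrArg (· ≠ ⊤) h)
  have h_real : (b : ℝ) + n = a + c := by exact_mod_cast h
  simp only [coe_nnreal_eq_coe_real]
  exact_mod_cast (by linarith : (a : ℝ) - n = b - c)

theorem toENNReal_sub_coe_add_toENNReal_neg {x : EReal} {K : ℝ} (hK : K ≤ 0) (hx : K ≤ x) :
    (x - K).toENNReal + (-x).toENNReal = x.toENNReal + ENNReal.ofReal (-K) := by
  induction x using EReal.rec with
  | bot => exact absurd (le_bot_iff.mp hx) (coe_ne_bot K)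
  | coe r =>
    have hKr : K ≤ r := by exact_mod_cast hx
    rw [← coe_sub, ← coe_neg, real_coe_toENNReal, real_coe_toENNReal, real_coe_toENNReal]
    rcases le_total r 0 with hr | hr
    · rw [ENNReal.ofReal_of_nonpos hr, zero_add, ← ENNReal.ofReal_add (by linarith) (by linarith)]
      ring_nf
    · rw [ENNReal.ofReal_of_nonpos (by linarith : -r ≤ 0), add_zero,
        ← ENNReal.ofReal_add hr (by linarith)]
      ring_nf
  | top => simp

end EReal

theorem eposPart_eq_toENNReal : eposPart = EReal.toENNReal := rfl

theorem eintegral_eq_lintegral_toENNReal_sub_add {S : Type*} [MeasurableSpace S] (μ : Measure S)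
    [IsProbabilityMeasure μ] {f : S → EReal} (hf : Measurable f) {K : ℝ} (hK : K ≤ 0)
    (hfK : ∀ s, (K : EReal) ≤ f s) :
    eintegral μ f = ((∫⁻ s, (f s - K).toENNReal ∂μ : ℝ≥0∞) : EReal) + K := by
  have h_neg_le : ∀ s, (-f s).toENNReal ≤ ENNReal.ofReal (-K) := fun s => by
    simpa using EReal.toENNReal_le_toENNReal (EReal.neg_le_neg_iff.2 (hfK s))
  have h_neg_ne_top : ∫⁻ s, (-f s).toENNReal ∂μ ≠ ⊤ :=
    ((lintegral_mono h_neg_le).trans_lt (by simp)).ne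
  have h_sum : ∫⁻ s, (f s - K).toENNReal ∂μ + ∫⁻ s, (-f s).toENNReal ∂μ =
      ∫⁻ s, (f s).toENNReal ∂μ + ENNReal.ofReal (-K) := by
    have h_meas : Measurable fun s => (-f s).toENNReal := hf.neg.ereal_toENNReal
    rw [← lintegral_add_right _ h_meas,
      lintegral_congr fun s => EReal.toENNReal_sub_coe_add_toENNReal_neg hK (hfK s),
      lintegral_add_right _ measurable_const, lintegral_const, measure_univ, mul_one]
  rw [eintegral, eposPart_eq_toENNReal,
    EReal.coe_ennreal_sub_eq_sub_of_add_eq h_neg_ne_top ofReal_ne_top h_sum,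
    EReal.coe_ennreal_ofReal, max_eq_left (by linarith), EReal.coe_neg, sub_eq_add_neg, neg_neg]

/-- Fatou's lemma for weakly converging probability measures and functions
uniformly bounded below by a real constant `K`. -/
theorem fatou_weak_convergence_bounded_below
    {S : Type*} [MetricSpace S] [MeasurableSpace S] [BorelSpace S]
    (μs : ℕ → Measure S) (μ : Measure S)
    [∀ n, IsProbabilityMeasure (μs n)] [IsProbabilityMeasure μ]
    (hweak : ∀ h : S → ℝ, Continuous h → (∃ C : ℝ, ∀ s, |h s| ≤ C) →
      Tendsto (fun n => ∫ s, h s ∂(μs n)) atTop (𝓝 (∫ s, h s ∂μ)))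
    (f : ℕ → S → EReal) (hf : ∀ n, Measurable (f n))
    (K : ℝ) (hK : ∀ n s, (K : EReal) ≤ f n s) :
    eintegral μ (fun s => liminf (fun p : ℕ × S => f p.1 p.2) (atTop ×ˢ 𝓝 s)) ≤
      liminf (fun n => eintegral (μs n) (f n)) atTop := by
  set K₀ := min K 0
  have hK₀ : K₀ ≤ 0 := min_le_right K 0
  have hfK₀ : ∀ n s, (K₀ : EReal) ≤ f n s := fun n s =>
    (EReal.coe_le_coe_iff.2 (min_le_left K 0)).trans (hK n s)
  set g := fun s => liminf (fun p : ℕ × S => f p.1 p.2) (atTop ×ˢ 𝓝 s)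
  have hgK₀ : ∀ s, (K₀ : EReal) ≤ g s := fun s =>
    le_liminf_of_le (by isBoundedDefault) (.of_forall fun p => hfK₀ p.1 p.2)
  have h_opens : ∀ G, IsOpen G → μ G ≤ liminf (fun n => μs n G) atTop :=
    fun G => le_liminf_measure_open_of_forall_integral_tendsto (fun h =>
      hweak h h.continuous ⟨‖h‖, fun s => by simpa using h.norm_coe_le_norm s⟩)
  calc eintegral μ g = ((∫⁻ s, (g s - K₀).toENNReal ∂μ : ℝ≥0∞) : EReal) + K₀ :=
        eintegral_eq_lintegral_toENNReal_sub_add μ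
          (lowerSemicontinuous_liminf_prod_nhds f).measurable hK₀ hgK₀
    _ ≤ ((liminf (fun n => ∫⁻ s, (f n s - K₀).toENNReal ∂μs n) atTop : ℝ≥0∞) : EReal) + K₀ := by
        refine add_le_add (EReal.coe_ennreal_le_coe_ennreal_iff.2 ?_) le_rfl
        simp_rw [g, EReal.toENNReal_liminf_sub_coe]
        exact lintegral_liminf_prod_nhds_le h_opens _
    _ = liminf (fun n => ((∫⁻ s, (f n s - K₀).toENNReal ∂μs n : ℝ≥0∞) : EReal) + K₀) atTop :=
        EReal.coe_ennreal_liminf_add_coe _ _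
    _ = liminf (fun n => eintegral (μs n) (f n)) atTop := by
        simp_rw [eintegral_eq_lintegral_toENNReal_sub_add (μs _) (hf _) hK₀ (hfK₀ _)]
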